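/- arXiv:2505.10090 — 3 statements merged into one kernel-verified Lean document; each statement's English description precedes it below -/
import Mathlib

section
/- Let p be an odd prime and α a positive integer, and set n = p^α. Then the Sombor index of Cl₂(ℤ_n) equals ((φ(n) − 2)/2) · √2, where φ is Euler's totient function. -/
/-- The clean graph `Cl₂(R)`: vertices are pairs `(e, u)` where `e` is a nonzero
idempotent of `R` and `u` is a unit of `R`; two distinct vertices `(e, u)` and
`(f, v)` are adjacent iff `e * f = 0` or `u * v = 1`. -/
def Cl2 (R : Type*) [CommRing R] :
    SimpleGraph ({e : R // IsIdempotentElem e ∧ e ≠ 0} × Rˣ) where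
  Adj v w := v ≠ w ∧ (((v.1 : R) * (w.1 : R) = 0) ∨ ((v.2 : R) * (w.2 : R) = 1))
  symm := by
    constructor
    rintro v w ⟨hne, h⟩
    refine ⟨hne.symm, ?_⟩
    rcases h with h | h
    · left; rwa [mul_comm]
    · right; rwa [mul_comm]
  loopless := by constructor; rintro v ⟨h, -⟩; exact h rfl

/-- The Sombor index of a graph: the sum over edges `uv` of
`√(deg(u)² + deg(v)²)`. -/
noncomputable def somborIndex {V : Type*} (G : SimpleGraph V) : ℝ :=
  ∑ᶠ e ∈ G.edgeSet,
    Sym2.lift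
      ⟨fun u v =>
        Real.sqrt (((G.neighborSet u).ncard : ℝ) ^ 2 + ((G.neighborSet v).ncard : ℝ) ^ 2),
        fun u v => by simp [add_comm]⟩ e

/-! `ZMod (p ^ α)` is a local ring, so its only nonzero idempotent is `1` and no product `e * f`
of idempotent coordinates vanishes: `Cl₂` joins `(1, u)` to `(1, u⁻¹)` and nothing else. As `2` is
a unit, `u⁻¹ = u` only for `u = ±1`, so `Cl₂` is a perfect matching on the remaining `φ(n) - 2`
vertices: it has `(φ(n) - 2) / 2` edges, each contributing `√(1² + 1²)`. -/

open Finset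

theorem ZMod.isLocalRing_prime_pow {p α : ℕ} (hp : p.Prime) (hα : 0 < α) :
    IsLocalRing (ZMod (p ^ α)) := by
  have : Fact (1 < p ^ α) := ⟨Nat.one_lt_pow hα.ne' hp.one_lt⟩
  have isUnit_iff (a : ZMod (p ^ α)) : IsUnit a ↔ ¬ p ∣ a.val := by
    rw [← ZMod.isUnit_natCast_iff_not_dvd_pow hp hα, ZMod.natCast_zmod_val]
  refine .of_nonunits_add fun a b ha hb => ?_
  simp only [mem_nonunits_iff, isUnit_iff, not_not] at ha hb ⊢
  rw [ZMod.val_add]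
  exact (Nat.dvd_mod_iff (dvd_pow_self p hα.ne')).mpr (dvd_add ha hb)

namespace IsLocalRing

variable {R : Type*} [CommRing R] [IsLocalRing R]

theorem eq_one_of_isIdempotentElem {e : R} (he : IsIdempotentElem e) (h0 : e ≠ 0) : e = 1 := by
  have h : e * (1 - e) = 0 := by rw [mul_sub, mul_one, he.eq, sub_self]
  rcases isUnit_or_isUnit_one_sub_self e with hu | hu
  · exact (sub_eq_zero.mp (hu.mul_right_eq_zero.mp h)).symm
  · exact absurd (hu.mul_left_eq_zero.mp h) h0

theorem eq_one_or_eq_neg_one_of_mul_self_eq_one (h2 : IsUnit (2 : R)) {x : R} (hx : x * x = 1) :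
    x = 1 ∨ x = -1 := by
  have h : (x + 1) * (x - 1) = 0 := by linear_combination hx
  have hsum : (x + 1) + (1 - x) = 2 := by ring
  rcases isUnit_or_isUnit_of_isUnit_add (hsum ▸ h2) with hu | hu
  · exact Or.inl (sub_eq_zero.mp (hu.mul_right_eq_zero.mp h))
  · have : IsUnit (x - 1) := by simpa [neg_sub] using hu.neg
    exact Or.inr (eq_neg_of_add_eq_zero_left (this.mul_left_eq_zero.mp h))

theorem units_inv_eq_self_iff (h2 : IsUnit (2 : R)) (u : Rˣ) : u⁻¹ = u ↔ u = 1 ∨ u = -1 := by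
  constructor
  · intro h
    have hu : (u : R) * u = 1 := by simpa using congrArg Units.val (inv_eq_iff_mul_eq_one.mp h)
    rcases eq_one_or_eq_neg_one_of_mul_self_eq_one h2 hu with h1 | h1
    · exact Or.inl (Units.ext h1)
    · exact Or.inr (Units.ext h1)
  · rintro (rfl | rfl) <;> simp

theorem card_filter_inv_ne_self_add_two [Fintype Rˣ] [DecidableEq Rˣ] (h2 : IsUnit (2 : R)) :
    #{u : Rˣ | u⁻¹ ≠ u} + 2 = Fintype.card Rˣ := by
  have hinv : ({u : Rˣ | u⁻¹ = u} : Finset Rˣ) = {1, -1} := by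
    ext u
    simp [units_inv_eq_self_iff h2 u]
  have hne : (1 : Rˣ) ≠ -1 := fun h => h2.ne_zero (by
    linear_combination (by simpa using congrArg Units.val h : (1 : R) = -1))
  rw [← card_univ, ← card_filter_add_card_filter_not (s := univ) (fun u : Rˣ => u⁻¹ = u), hinv,
    card_pair hne]
  exact add_comm _ _

theorem card_nonzero_idempotents [Fintype {e : R // IsIdempotentElem e ∧ e ≠ 0}] :
    Fintype.card {e : R // IsIdempotentElem e ∧ e ≠ 0} = 1 :=
  Fintype.card_eq_one_iff.mpr
    ⟨⟨1, .one, one_ne_zero⟩, fun e => Subtype.ext (eq_one_of_isIdempotentElem e.2.1 e.2.2)⟩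

end IsLocalRing

theorem SimpleGraph.ncard_neighborSet_eq_degree {V : Type*} (G : SimpleGraph V) (v : V)
    [Fintype (G.neighborSet v)] : (G.neighborSet v).ncard = G.degree v := by
  rw [Set.ncard_eq_toFinset_card', ← neighborFinset_def, card_neighborFinset_eq_degree]

theorem somborIndex_eq_of_degree_le_one {V : Type*} [Fintype V] (G : SimpleGraph V)
    [DecidableRel G.Adj] (h : ∀ v, G.degree v ≤ 1) :
    somborIndex G = #G.edgeFinset * √2 := by
  have hdeg {v w : V} (hvw : G.Adj v w) : G.degree v = 1 :=
    le_antisymm (h v) (G.degree_pos_iff_exists_adj v |>.mpr ⟨w, hvw⟩)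
  rw [somborIndex, ← SimpleGraph.coe_edgeFinset, finsum_mem_coe_finset, ← nsmul_eq_mul,
    ← sum_const]
  refine sum_congr rfl fun e he => ?_
  induction e using Sym2.ind with
  | _ v w =>
    rw [SimpleGraph.mem_edgeFinset, SimpleGraph.mem_edgeSet] at he
    norm_num [SimpleGraph.ncard_neighborSet_eq_degree, hdeg he, hdeg he.symm]

section Cl2

variable {R : Type*} [CommRing R] [IsLocalRing R]

theorem cl2_adj_iff_of_isLocalRing {v w : {e : R // IsIdempotentElem e ∧ e ≠ 0} × Rˣ} :
    (Cl2 R).Adj v w ↔ v.2⁻¹ ≠ v.2 ∧ w = (v.1, v.2⁻¹) := by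
  have hval (e : {e : R // IsIdempotentElem e ∧ e ≠ 0}) : (e : R) = 1 :=
    IsLocalRing.eq_one_of_isIdempotentElem e.2.1 e.2.2
  have hfst : w.1 = v.1 := Subtype.ext ((hval w.1).trans (hval v.1).symm)
  simp only [Cl2, hval, mul_one, one_ne_zero, false_or, ← Units.val_mul, Units.val_eq_one,
    mul_eq_one_iff_eq_inv', Prod.ext_iff, hfst, true_and, ne_eq]
  constructor
  · rintro ⟨hne, hw⟩
    exact ⟨fun h => hne (hw.trans h).symm, hw⟩
  · rintro ⟨hne, hw⟩
    exact ⟨fun h => hne (h.trans hw).symm, hw⟩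

variable [DecidableEq Rˣ]

theorem cl2_degree_of_isLocalRing (e : {e : R // IsIdempotentElem e ∧ e ≠ 0}) (u : Rˣ)
    [Fintype ((Cl2 R).neighborSet (e, u))] :
    (Cl2 R).degree (e, u) = if u⁻¹ = u then 0 else 1 := by
  have hnbr : (Cl2 R).neighborSet (e, u) = {w | u⁻¹ ≠ u ∧ w = (e, u⁻¹)} :=
    Set.ext fun _ => cl2_adj_iff_of_isLocalRing
  rw [← SimpleGraph.ncard_neighborSet_eq_degree, hnbr]
  split_ifs with h <;> simp [h]

variable [Fintype {e : R // IsIdempotentElem e ∧ e ≠ 0}] [Fintype Rˣ] [DecidableRel (Cl2 R).Adj]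

theorem cl2_degree_le_one_of_isLocalRing (v : {e : R // IsIdempotentElem e ∧ e ≠ 0} × Rˣ) :
    (Cl2 R).degree v ≤ 1 := by
  obtain ⟨e, u⟩ := v
  rw [cl2_degree_of_isLocalRing]
  split_ifs <;> simp

theorem cl2_two_mul_card_edgeFinset_of_isLocalRing :
    2 * #(Cl2 R).edgeFinset = #{u : Rˣ | u⁻¹ ≠ u} := by
  rw [← SimpleGraph.sum_degrees_eq_twice_card_edges, Fintype.sum_prod_type]
  simp only [cl2_degree_of_isLocalRing]
  rw [sum_const, card_univ, IsLocalRing.card_nonzero_idempotents, one_smul, card_filter]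
  simp only [ne_eq, ite_not]

end Cl2

theorem sombor_prime_power (p : ℕ) (hp : p.Prime) (hodd : p ≠ 2) (α : ℕ) (hα : 0 < α)
    (n : ℕ) (hn : n = p ^ α) :
    somborIndex (Cl2 (ZMod n)) = ((n.totient : ℝ) - 2) / 2 * Real.sqrt 2 := by
  subst hn
  have : NeZero (p ^ α) := ⟨pow_ne_zero α hp.ne_zero⟩
  have := ZMod.isLocalRing_prime_pow hp hα
  have h2 : IsUnit (2 : ZMod (p ^ α)) := by
    simpa using (ZMod.isUnit_natCast_iff_not_dvd_pow hp hα (a := 2)).mpr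
      fun h => hodd ((Nat.prime_dvd_prime_iff_eq hp Nat.prime_two).mp h)
  classical
  have hedges : 2 * #(Cl2 (ZMod (p ^ α))).edgeFinset + 2 = (p ^ α).totient := by
    rw [cl2_two_mul_card_edgeFinset_of_isLocalRing, IsLocalRing.card_filter_inv_ne_self_add_two h2,
      ZMod.card_units_eq_totient]
  rw [somborIndex_eq_of_degree_le_one _ cl2_degree_le_one_of_isLocalRing, ← hedges]
  push_cast
  ring
end

section
/- Let α ≥ 3 be an integer and n = 2^α. Then every vertex of the graph Cl₂(ℤ_n) has degree at most 1, and the number of edges of Cl₂(ℤ_n) equals (φ(n) − 4)/2; moreover, exactly 4 vertices of Cl₂(ℤ_n) are isolated (have degree 0). -/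
/-! The ring `ℤ/2^α` is local, so its only nonzero idempotent is `1` and in `Cl₂` two vertices
are adjacent exactly when their units are distinct and mutually inverse. Every vertex therefore
has at most one neighbour, and the isolated ones are those whose unit squares to `1`. For `α ≥ 3`
the square roots of `1` are `±1` and `2^(α-1) ± 1`: from `2^α ∣ (x - 1)(x + 1)` with `x` odd,
one factor must be divisible by `2^(α-1)`, since the two factors share only a single `2`. -/

theorem IsLocalRing.eq_zero_or_eq_one_of_isIdempotentElem {R : Type*} [CommRing R]
    [IsLocalRing R] {e : R} (he : IsIdempotentElem e) : e = 0 ∨ e = 1 := by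
  rcases IsLocalRing.isUnit_or_isUnit_one_sub_self e with hu | hu
  · exact Or.inr ((IsIdempotentElem.iff_eq_one_of_isUnit hu).mp he)
  · left
    simpa using (IsIdempotentElem.iff_eq_one_of_isUnit hu).mp he.one_sub

theorem ZMod.isLocalRing_prime_pow_s6 (p : ℕ) [Fact p.Prime] (k : ℕ) :
    IsLocalRing (ZMod (p ^ (k + 1))) :=
  have : Nontrivial (ZMod (p ^ (k + 1))) :=
    ZMod.nontrivial_iff.mpr (Nat.one_lt_pow k.succ_ne_zero (Fact.out : p.Prime).one_lt).ne'
  IsLocalRing.of_surjective' _ (ZMod.ringHom_surjective (PadicInt.toZModPow (p := p) (k + 1)))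

theorem Int.two_pow_dvd_sub_one_or_add_one {a : ℤ} {m : ℕ} (h : 2 ^ (m + 2) ∣ a ^ 2 - 1) :
    2 ^ (m + 1) ∣ a - 1 ∨ 2 ^ (m + 1) ∣ a + 1 := by
  obtain ⟨b, rfl⟩ : Odd a := by
    by_contra hodd
    have h2 : (2 : ℤ) ∣ a ^ 2 - 1 := (dvd_pow_self 2 (by omega)).trans h
    have : (2 : ℤ) ∣ a ^ 2 := dvd_pow (Int.not_odd_iff_even.mp hodd).two_dvd two_ne_zero
    omega
  have hb : 2 ^ m ∣ b * (b + 1) := by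
    rw [show (2 * b + 1) ^ 2 - 1 = 2 ^ 2 * (b * (b + 1)) by ring, pow_add, mul_comm] at h
    exact (mul_dvd_mul_iff_left (by norm_num)).mp h
  have coprime_of_odd {c : ℤ} (hc : Odd c) : IsCoprime (2 ^ m) c :=
    ((Prime.coprime_iff_not_dvd Int.prime_two).mpr
      (Int.not_even_iff_odd.mpr hc ∘ even_iff_two_dvd.mpr)).pow_left
  rcases Int.even_or_odd b with heven | hodd
  · left
    have := (coprime_of_odd heven.add_one).dvd_of_dvd_mul_right hb
    rw [pow_succ', show 2 * b + 1 - 1 = 2 * b by ring]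
    exact mul_dvd_mul_left 2 this
  · right
    have := (coprime_of_odd hodd).dvd_of_dvd_mul_left hb
    rw [pow_succ', show 2 * b + 1 + 1 = 2 * (b + 1) by ring]
    exact mul_dvd_mul_left 2 this

theorem ZMod.two_pow_self_eq_zero (n : ℕ) : (2 : ZMod (2 ^ n)) ^ n = 0 := by
  exact_mod_cast ZMod.natCast_self (2 ^ n)

theorem ZMod.two_pow_mul_eq_zero_or_eq (k : ℕ) (c : ZMod (2 ^ (k + 1))) :
    2 ^ k * c = 0 ∨ 2 ^ k * c = 2 ^ k := by
  obtain ⟨d, rfl⟩ := ZMod.intCast_surjective c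
  have h := ZMod.two_pow_self_eq_zero (k + 1)
  rcases Int.even_or_odd' d with ⟨e, rfl | rfl⟩
  · left; push_cast; linear_combination (e : ZMod (2 ^ (k + 1))) * h
  · right; push_cast; linear_combination (e : ZMod (2 ^ (k + 1))) * h

theorem ZMod.sq_eq_one_iff_two_pow (k : ℕ) (x : ZMod (2 ^ (k + 3))) :
    x ^ 2 = 1 ↔ x = 1 ∨ x = -1 ∨ x = 2 ^ (k + 2) + 1 ∨ x = 2 ^ (k + 2) - 1 := by
  have h := ZMod.two_pow_self_eq_zero (k + 3)
  constructor
  · intro hx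
    obtain ⟨a, rfl⟩ := ZMod.intCast_surjective x
    have hdvd : ((2 ^ (k + 3) : ℕ) : ℤ) ∣ a ^ 2 - 1 := by
      rw [← ZMod.intCast_zmod_eq_zero_iff_dvd]
      push_cast
      rw [hx, sub_self]
    push_cast at hdvd
    rcases Int.two_pow_dvd_sub_one_or_add_one (m := k + 1) hdvd with ⟨c, hc⟩ | ⟨c, hc⟩
    · have hx : (a : ZMod (2 ^ (k + 3))) = 2 ^ (k + 2) * c + 1 := by
        have := congrArg (Int.cast : ℤ → ZMod (2 ^ (k + 3))) hc
        push_cast at this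
        linear_combination this
      rcases ZMod.two_pow_mul_eq_zero_or_eq (k + 2) c with h0 | h0 <;> rw [hx, h0] <;> simp
    · have hx : (a : ZMod (2 ^ (k + 3))) = 2 ^ (k + 2) * c - 1 := by
        have := congrArg (Int.cast : ℤ → ZMod (2 ^ (k + 3))) hc
        push_cast at this
        linear_combination this
      rcases ZMod.two_pow_mul_eq_zero_or_eq (k + 2) c with h0 | h0 <;> rw [hx, h0] <;> simp
  · rintro (rfl | rfl | rfl | rfl)
    · ring
    · ring
    · linear_combination (2 ^ (k + 1) + 1 : ZMod (2 ^ (k + 3))) * h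
    · linear_combination (2 ^ (k + 1) - 1 : ZMod (2 ^ (k + 3))) * h

theorem ZMod.natCast_injOn_Iio (n : ℕ) : Set.InjOn (Nat.cast : ℕ → ZMod n) (Set.Iio n) :=
  fun a ha b hb hab => by
    rwa [ZMod.natCast_eq_natCast_iff', Nat.mod_eq_of_lt ha, Nat.mod_eq_of_lt hb] at hab

theorem ZMod.ncard_sq_eq_one_two_pow (k : ℕ) :
    {x : ZMod (2 ^ (k + 3)) | x ^ 2 = 1}.ncard = 4 := by
  have hN : 2 ^ (k + 3) = 2 * 2 ^ (k + 2) := by ring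
  have hH : 4 ≤ 2 ^ (k + 2) := by
    calc 4 = 2 ^ 2 := by norm_num
      _ ≤ 2 ^ (k + 2) := Nat.pow_le_pow_right two_pos (by omega)
  set S : Set ℕ := {1, 2 ^ (k + 3) - 1, 2 ^ (k + 2) + 1, 2 ^ (k + 2) - 1}
  have hS : {x : ZMod (2 ^ (k + 3)) | x ^ 2 = 1} = Nat.cast '' S := by
    ext x
    have h0 : ((2 ^ (k + 3) : ℕ) : ZMod (2 ^ (k + 3))) = 0 := ZMod.natCast_self _
    simp only [S, Set.mem_ofPred_eq, sq_eq_one_iff_two_pow, Set.image_insert_eq,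
      Set.image_singleton, Set.mem_insert_iff, Set.mem_singleton_iff]
    push_cast [Nat.one_le_two_pow, h0]
    rw [zero_sub]
  rw [hS, ((ZMod.natCast_injOn_Iio _).mono ?_).ncard_image]
  · rw [Set.ncard_insert_of_notMem, Set.ncard_insert_of_notMem, Set.ncard_pair] <;>
      simp only [ne_eq, Set.mem_insert_iff, Set.mem_singleton_iff] <;> omega
  · simp only [S, Set.insert_subset_iff, Set.singleton_subset_iff, Set.mem_Iio]
    omega

theorem Units.ncard_sq_eq_one (R : Type*) [CommMonoid R] :
    {u : Rˣ | u ^ 2 = 1}.ncard = {x : R | x ^ 2 = 1}.ncard := by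
  rw [← Units.val_injective.injOn.ncard_image]
  congr 1
  ext x
  constructor
  · rintro ⟨u, hu, rfl⟩
    simp only [Set.mem_ofPred_eq] at hu ⊢
    rw [← Units.val_pow_eq_pow_val, hu, Units.val_one]
  · intro hx
    rw [Set.mem_ofPred_eq, sq] at hx
    exact ⟨Units.mkOfMulEqOne x x hx, Units.ext (by simpa [sq] using hx), rfl⟩

theorem SimpleGraph.two_mul_ncard_edgeSet_of_ncard_neighborSet_le_one {V : Type*} [Finite V]
    (G : SimpleGraph V) (h : ∀ v, (G.neighborSet v).ncard ≤ 1) :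
    2 * G.edgeSet.ncard = Nat.card V - {v | G.neighborSet v = ∅}.ncard := by
  classical
  have := Fintype.ofFinite V
  have hdeg (v : V) : G.degree v = if G.neighborSet v = ∅ then 0 else 1 := by
    rw [← G.card_neighborSet_eq_degree, ← Nat.card_eq_fintype_card, Nat.card_coe_set_eq]
    split_ifs with hv
    · simp [hv]
    · have := (Set.ncard_pos (Set.toFinite _)).mpr (Set.nonempty_iff_ne_empty.mpr hv)
      have := h v
      omega
  rw [Set.ncard_eq_toFinset_card', ← SimpleGraph.edgeFinset,
    ← G.sum_degrees_eq_twice_card_edges, Nat.card_eq_fintype_card, Set.ncard_eq_toFinset_card',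
    ← Finset.card_univ,
    ← Finset.card_filter_add_card_filter_not (s := Finset.univ) (fun v => G.neighborSet v = ∅)]
  simp [hdeg, Finset.sum_ite]

namespace Cl2

variable {R : Type*} [CommRing R] (hR : ∀ e : R, IsIdempotentElem e → e = 0 ∨ e = 1)
include hR

theorem coe_fst_eq_one (v : {e : R // IsIdempotentElem e ∧ e ≠ 0} × Rˣ) : (v.1 : R) = 1 :=
  (hR _ v.1.2.1).resolve_left v.1.2.2

theorem fst_eq_fst (v w : {e : R // IsIdempotentElem e ∧ e ≠ 0} × Rˣ) : v.1 = w.1 :=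
  Subtype.ext ((coe_fst_eq_one hR v).trans (coe_fst_eq_one hR w).symm)

theorem adj_iff {v w : {e : R // IsIdempotentElem e ∧ e ≠ 0} × Rˣ} :
    (Cl2 R).Adj v w ↔ v.2 ≠ w.2 ∧ v.2 * w.2 = 1 := by
  have hsnd : v = w ↔ v.2 = w.2 := ⟨congrArg Prod.snd, Prod.ext (fst_eq_fst hR v w)⟩
  have hfst : (v.1 : R) * w.1 ≠ 0 := by
    rw [coe_fst_eq_one hR w, mul_one]
    exact v.1.2.2
  change v ≠ w ∧ _ ↔ _
  rw [ne_eq, hsnd, or_iff_right hfst, ← Units.val_mul, Units.val_eq_one]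

theorem neighborSet_subset (v : {e : R // IsIdempotentElem e ∧ e ≠ 0} × Rˣ) :
    (Cl2 R).neighborSet v ⊆ {(v.1, v.2⁻¹)} := fun w hw =>
  Prod.ext (fst_eq_fst hR w v) (eq_inv_of_mul_eq_one_right ((adj_iff hR).mp hw).2)

theorem ncard_neighborSet_le_one (v : {e : R // IsIdempotentElem e ∧ e ≠ 0} × Rˣ) :
    ((Cl2 R).neighborSet v).ncard ≤ 1 :=
  (Set.ncard_le_ncard (neighborSet_subset hR v)).trans (Set.ncard_singleton _).le

theorem neighborSet_eq_empty_iff (v : {e : R // IsIdempotentElem e ∧ e ≠ 0} × Rˣ) :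
    (Cl2 R).neighborSet v = ∅ ↔ v.2 ^ 2 = 1 := by
  rw [sq, Set.eq_empty_iff_forall_notMem]
  constructor
  · intro h
    by_contra hv
    exact h (v.1, v.2⁻¹) ((adj_iff hR).mpr ⟨fun h' => hv (mul_eq_one_iff_eq_inv.mpr h'),
      mul_inv_cancel _⟩)
  · rintro hv w hw
    obtain ⟨hne, hmul⟩ := (adj_iff hR).mp hw
    exact hne (mul_left_cancel (hv.trans hmul.symm))

theorem bijective_snd [Nontrivial R] :
    Function.Bijective (Prod.snd : {e : R // IsIdempotentElem e ∧ e ≠ 0} × Rˣ → Rˣ) :=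
  ⟨fun v w h => Prod.ext (fst_eq_fst hR v w) h,
    fun u => ⟨(⟨1, IsIdempotentElem.one, one_ne_zero⟩, u), rfl⟩⟩

theorem natCard_vertices [Nontrivial R] :
    Nat.card ({e : R // IsIdempotentElem e ∧ e ≠ 0} × Rˣ) = Nat.card Rˣ :=
  Nat.card_congr (Equiv.ofBijective _ (bijective_snd hR))

theorem ncard_isolated [Nontrivial R] :
    {v | (Cl2 R).neighborSet v = ∅}.ncard = {x : R | x ^ 2 = 1}.ncard := by
  have hpre : {v | (Cl2 R).neighborSet v = ∅} = Prod.snd ⁻¹' {u : Rˣ | u ^ 2 = 1} :=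
    Set.ext (neighborSet_eq_empty_iff hR)
  rw [hpre, Set.ncard_preimage_of_injective_subset_range (bijective_snd hR).1
    (by rw [(bijective_snd hR).2.range_eq]; exact Set.subset_univ _), Units.ncard_sq_eq_one]

end Cl2

theorem cl2_two_power_structure (α : ℕ) (hα : 3 ≤ α) (n : ℕ) (hn : n = 2 ^ α) :
    (∀ v, ((Cl2 (ZMod n)).neighborSet v).ncard ≤ 1) ∧
    (Cl2 (ZMod n)).edgeSet.ncard = (n.totient - 4) / 2 ∧
    {v | (Cl2 (ZMod n)).neighborSet v = ∅}.ncard = 4 := by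
  obtain ⟨k, rfl⟩ : ∃ k, α = k + 3 := ⟨α - 3, by omega⟩
  subst hn
  have := ZMod.isLocalRing_prime_pow_s6 2 (k + 2)
  have hR : ∀ e : ZMod (2 ^ (k + 3)), IsIdempotentElem e → e = 0 ∨ e = 1 :=
    fun _ => IsLocalRing.eq_zero_or_eq_one_of_isIdempotentElem
  have hiso : {v | (Cl2 (ZMod (2 ^ (k + 3)))).neighborSet v = ∅}.ncard = 4 := by
    rw [Cl2.ncard_isolated hR, ZMod.ncard_sq_eq_one_two_pow]
  refine ⟨Cl2.ncard_neighborSet_le_one hR, ?_, hiso⟩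
  have h2E := (Cl2 _).two_mul_ncard_edgeSet_of_ncard_neighborSet_le_one
    (Cl2.ncard_neighborSet_le_one hR)
  rw [hiso, Cl2.natCard_vertices hR, Nat.card_eq_fintype_card, ZMod.card_units_eq_totient] at h2E
  omega
end

section
/- Let n = p₁^{α₁} · … · p_k^{α_k} with k ≥ 2, where p₁, …, p_k are distinct primes and α₁, …, α_k are positive integers. Then in the graph Cl₂(ℤ_n), for every unit u of ℤ_n, the degree of the vertex (1, u) equals 2^k − 2 if u² = 1, and equals 2^k − 1 if u² ≠ 1. -/
/-!
The neighbours of `(1, u)` in `Cl₂(R)` are exactly the vertices `(e, u⁻¹) ≠ (1, u)`, because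
`1 * e = e ≠ 0` rules out the first adjacency condition. So the degree of `(1, u)` is the number
of nonzero idempotents of `R`, minus one when `(1, u)` itself has second coordinate `u⁻¹`, i.e.
when `u² = 1`. By the Chinese remainder theorem `ℤ_n ≅ ∏ ℤ_{pᵢ^αᵢ}`, and the only idempotents
of `ℤ_{q^β}` are `0` and `1` (`e(1 - e) = 0` and `e`, `1 - e` cannot both be divisible by `q`),
so `ℤ_n` has `2^k` idempotents.
-/

section Idempotents

theorem Pi.isIdempotentElem_iff {ι : Type*} {M : ι → Type*} [∀ i, Mul (M i)] {x : ∀ i, M i} :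
    IsIdempotentElem x ↔ ∀ i, IsIdempotentElem (x i) :=
  funext_iff

def MulEquiv.idempotentsCongr {M N : Type*} [Mul M] [Mul N] (f : M ≃* N) :
    {x : M // IsIdempotentElem x} ≃ {y : N // IsIdempotentElem y} :=
  f.toEquiv.subtypeEquiv fun x => ⟨fun h => h.map f, fun h => by simpa using h.map f.symm⟩

def Pi.idempotentsEquiv {ι : Type*} {M : ι → Type*} [∀ i, Mul (M i)] :
    {x : ∀ i, M i // IsIdempotentElem x} ≃ ∀ i, {y : M i // IsIdempotentElem y} :=
  (Equiv.subtypeEquivRight fun _ => Pi.isIdempotentElem_iff).trans Equiv.subtypePiEquivPi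

theorem card_nonzero_idempotents (R : Type*) [Semiring R] :
    Nat.card {e : R // IsIdempotentElem e ∧ e ≠ 0} =
      Nat.card {e : R // IsIdempotentElem e} - 1 := by
  have := Set.ncard_sdiff_singleton_of_mem (s := {e : R | IsIdempotentElem e}) .zero
  rwa [← Nat.card_coe_set_eq, ← Nat.card_coe_set_eq] at this

end Idempotents

namespace ZMod

theorem isIdempotentElem_prime_pow_iff {q : ℕ} (hq : q.Prime) (β : ℕ) {e : ZMod (q ^ β)} :
    IsIdempotentElem e ↔ e = 0 ∨ e = 1 := by
  refine ⟨fun he => ?_, by rintro (rfl | rfl) <;> simp [IsIdempotentElem]⟩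
  obtain ⟨a, rfl⟩ := ZMod.intCast_surjective e
  have hdvd : (q : ℤ) ^ β ∣ a * (1 - a) := by
    have := he.mul_one_sub_self
    rw [← Int.cast_one, ← Int.cast_sub, ← Int.cast_mul, ZMod.intCast_zmod_eq_zero_iff_dvd] at this
    exact_mod_cast this
  have hq' : Prime (q : ℤ) := Nat.prime_iff_prime_int.mp hq
  by_cases hqa : (q : ℤ) ∣ a
  · have hcop : IsCoprime ((q : ℤ) ^ β) (1 - a) := by
      refine (hq'.coprime_iff_not_dvd.mpr fun h => hq'.not_dvd_one ?_).pow_left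
      simpa using dvd_add hqa h
    left
    rw [ZMod.intCast_zmod_eq_zero_iff_dvd]
    exact_mod_cast hcop.dvd_of_dvd_mul_right hdvd
  · have hcop : IsCoprime ((q : ℤ) ^ β) a := (hq'.coprime_iff_not_dvd.mpr hqa).pow_left
    right
    rw [← Int.cast_one, ZMod.intCast_eq_intCast_iff_dvd_sub]
    exact_mod_cast hcop.dvd_of_dvd_mul_left hdvd

theorem card_idempotents_prime_pow {q : ℕ} (hq : q.Prime) {β : ℕ} (hβ : β ≠ 0) :
    Nat.card {e : ZMod (q ^ β) // IsIdempotentElem e} = 2 := by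
  have : Fact (1 < q ^ β) := ⟨Nat.one_lt_pow hβ hq.one_lt⟩
  have hset : {e : ZMod (q ^ β) | IsIdempotentElem e} = {0, 1} := by
    ext e
    exact isIdempotentElem_prime_pow_iff hq β
  rw [← Set.ncard_pair (zero_ne_one (α := ZMod (q ^ β))), ← hset, ← Nat.card_coe_set_eq]
  rfl

theorem card_idempotents_prod_prime_pow {ι : Type*} [Fintype ι] (p α : ι → ℕ)
    (hp : ∀ i, (p i).Prime) (hinj : Function.Injective p) (hα : ∀ i, 0 < α i) :
    Nat.card {e : ZMod (∏ i, p i ^ α i) // IsIdempotentElem e} = 2 ^ Fintype.card ι := by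
  have hcop : Pairwise (Function.onFun Nat.Coprime fun i => p i ^ α i) := fun i j hij =>
    ((Nat.coprime_primes (hp i) (hp j)).mpr (hinj.ne hij)).pow _ _
  rw [Nat.card_congr
      ((prodEquivPi _ hcop).toMulEquiv.idempotentsCongr.trans Pi.idempotentsEquiv),
    Nat.card_pi, Finset.prod_congr rfl fun i _ => card_idempotents_prime_pow (hp i) (hα i).ne',
    Finset.prod_const, Finset.card_univ]

end ZMod

section Cl2

variable {R : Type*} [CommRing R] (h1 : IsIdempotentElem (1 : R) ∧ (1 : R) ≠ 0) (u : Rˣ)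

theorem cl2_neighborSet_one :
    (Cl2 R).neighborSet (⟨1, h1⟩, u) = {w | w.2 = u⁻¹} \ {(⟨1, h1⟩, u)} := by
  ext ⟨⟨e, he⟩, v⟩
  simp only [SimpleGraph.mem_neighborSet, Cl2, Set.mem_sdiff, Set.mem_ofPred_eq,
    Set.mem_singleton_iff, one_mul, he.2, false_or]
  rw [and_comm, ne_comm, eq_inv_iff_mul_eq_one, mul_comm, ← Units.val_mul, Units.val_eq_one]

theorem ncard_setOf_snd_eq {A B : Type*} (b : B) :
    {w : A × B | w.2 = b}.ncard = Nat.card A := by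
  rw [show {w : A × B | w.2 = b} = Set.univ ×ˢ {b} by ext; simp, Set.ncard_prod,
    Set.ncard_univ, Set.ncard_singleton, mul_one]

theorem cl2_ncard_neighborSet_one_of_sq_eq_one (hu : u ^ 2 = 1) :
    ((Cl2 R).neighborSet (⟨1, h1⟩, u)).ncard =
      Nat.card {e : R // IsIdempotentElem e ∧ e ≠ 0} - 1 := by
  rw [cl2_neighborSet_one, Set.ncard_sdiff_singleton_of_mem, ncard_setOf_snd_eq]
  exact eq_inv_iff_mul_eq_one.mpr (by rw [← sq, hu])

theorem cl2_ncard_neighborSet_one_of_sq_ne_one (hu : u ^ 2 ≠ 1) :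
    ((Cl2 R).neighborSet (⟨1, h1⟩, u)).ncard = Nat.card {e : R // IsIdempotentElem e ∧ e ≠ 0} := by
  rw [cl2_neighborSet_one, Set.sdiff_singleton_eq_self, ncard_setOf_snd_eq]
  exact fun h => hu (by rw [sq]; exact eq_inv_iff_mul_eq_one.mp h)

end Cl2

theorem cl2_general_degree_one_general (k : ℕ) (p : Fin k → ℕ) (α : Fin k → ℕ)
    (hp : ∀ i, (p i).Prime) (hinj : Function.Injective p) (hα : ∀ i, 0 < α i)
    (n : ℕ) (hn : n = ∏ i, p i ^ α i)
    (u : (ZMod n)ˣ) (h1 : IsIdempotentElem (1 : ZMod n) ∧ (1 : ZMod n) ≠ 0) :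
    (u ^ 2 = 1 → ((Cl2 (ZMod n)).neighborSet (⟨1, h1⟩, u)).ncard = 2 ^ k - 2) ∧
    (u ^ 2 ≠ 1 → ((Cl2 (ZMod n)).neighborSet (⟨1, h1⟩, u)).ncard = 2 ^ k - 1) := by
  subst hn
  have hcard : Nat.card {e : ZMod (∏ i, p i ^ α i) // IsIdempotentElem e ∧ e ≠ 0} = 2 ^ k - 1 := by
    rw [card_nonzero_idempotents, ZMod.card_idempotents_prod_prime_pow p α hp hinj hα,
      Fintype.card_fin]
  refine ⟨fun hu => ?_, fun hu => ?_⟩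
  · rw [cl2_ncard_neighborSet_one_of_sq_eq_one h1 u hu, hcard]
    omega
  · rw [cl2_ncard_neighborSet_one_of_sq_ne_one h1 u hu, hcard]

theorem cl2_general_degree_one (k : ℕ) (hk : 2 ≤ k) (p : Fin k → ℕ) (α : Fin k → ℕ)
    (hp : ∀ i, (p i).Prime) (hinj : Function.Injective p) (hα : ∀ i, 0 < α i)
    (n : ℕ) (hn : n = ∏ i, p i ^ α i)
    (u : (ZMod n)ˣ) (h1 : IsIdempotentElem (1 : ZMod n) ∧ (1 : ZMod n) ≠ 0) :
    (u ^ 2 = 1 → ((Cl2 (ZMod n)).neighborSet (⟨1, h1⟩, u)).ncard = 2 ^ k - 2) ∧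
    (u ^ 2 ≠ 1 → ((Cl2 (ZMod n)).neighborSet (⟨1, h1⟩, u)).ncard = 2 ^ k - 1) :=
  cl2_general_degree_one_general k p α hp hinj hα n hn u h1
end
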